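/- arXiv:2203.11847 — 3 statements merged into one kernel-verified Lean document; each statement's English description precedes it below -/
import Mathlib

section
/- Let a, b > 0 with a ≠ b. Then lim_{t → ∞} max_{x∈[0,1]} (t − a^x b^{1−x} − (t−a)^x (t−b)^{1−x}) = f(a,b), where f(a,b) = a − ((a−b)/(log a − log b)) · log(e·a·(log a − log b)/(a−b)). -/
/-!
With `gap u v x = x u + (1 - x) v - u ^ x v ^ (1 - x)`, the weighted AM–GM gap, the function
maximised is `gap a b x + gap (t - a) (t - b) x`. The second gap is nonnegative and, by the
harmonic–geometric mean inequality, at most `(a - b)² / (t - a - b)`, so the maxima converge to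
the maximum of `gap a b` on `[0, 1]`. Writing `a ^ x b ^ (1 - x) = exp y` and bounding `exp` below
by its tangent at `log L`, where `L = (a - b) / (log a - log b)` is the logarithmic mean, shows
that this maximum is `a - L log (e a / L)`, attained where `a ^ x b ^ (1 - x) = L`.
-/

open Set Filter Topology Real

lemma tendsto_sSup_image_of_le_of_le {α ι : Type*} {l : Filter ι} {S : Set α} {φ : α → ℝ}
    {g : ι → α → ℝ} {ε : ι → ℝ} {M : ℝ} (hM : IsGreatest (φ '' S) M)
    (hε : Tendsto ε l (𝓝 0)) (hlow : ∀ᶠ i in l, ∀ x ∈ S, φ x ≤ g i x)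
    (hup : ∀ᶠ i in l, ∀ x ∈ S, g i x ≤ φ x + ε i) :
    Tendsto (fun i => sSup (g i '' S)) l (𝓝 M) := by
  obtain ⟨⟨x₀, hx₀, rfl⟩, hφM⟩ := hM
  have hgM : ∀ᶠ i in l, ∀ x ∈ S, g i x ≤ φ x₀ + ε i := hup.mono fun i hi x hx =>
    (hi x hx).trans (by gcongr; exact hφM (mem_image_of_mem φ hx))
  refine tendsto_of_tendsto_of_tendsto_of_le_of_le' tendsto_const_nhds
    (by simpa using hε.const_add (φ x₀)) ?_ ?_
  · filter_upwards [hlow, hgM] with i hi hiM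
    have hbdd : BddAbove (g i '' S) := ⟨_, forall_mem_image.2 hiM⟩
    exact (hi x₀ hx₀).trans (le_csSup hbdd (mem_image_of_mem _ hx₀))
  · filter_upwards [hgM] with i hiM
    exact csSup_le (Nonempty.image _ ⟨x₀, hx₀⟩) (forall_mem_image.2 hiM)

noncomputable def amGmGap (u v x : ℝ) : ℝ := x * u + (1 - x) * v - u ^ x * v ^ (1 - x)

lemma amGmGap_nonneg {u v x : ℝ} (hu : 0 ≤ u) (hv : 0 ≤ v) (hx : x ∈ Icc 0 1) :
    0 ≤ amGmGap u v x :=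
  sub_nonneg.2 (geom_mean_le_arith_mean2_weighted hx.1 (sub_nonneg.2 hx.2) hu hv (by ring))

lemma amGmGap_le {u v w x : ℝ} (hw : 0 < w) (hwu : w ≤ u) (hwv : w ≤ v) (hx : x ∈ Icc 0 1) :
    amGmGap u v x ≤ (u - v) ^ 2 / w := by
  obtain ⟨hx₀, hx₁⟩ := hx
  have hu : 0 < u := hw.trans_le hwu
  have hv : 0 < v := hw.trans_le hwv
  set G := u ^ x * v ^ (1 - x)
  set H := x * v + (1 - x) * u
  have hG : 0 < G := by positivity
  have hwH : w ≤ H := by nlinarith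
  -- harmonic–geometric mean inequality, from AM–GM for `u⁻¹` and `v⁻¹`
  have hGH : u * v ≤ G * H := by
    have h := geom_mean_le_arith_mean2_weighted hx₀ (sub_nonneg.2 hx₁)
      (inv_nonneg.2 hu.le) (inv_nonneg.2 hv.le) (by ring)
    rw [inv_rpow hu.le, inv_rpow hv.le, ← mul_inv, inv_le_iff_one_le_mul₀ hG] at h
    have : (x * u⁻¹ + (1 - x) * v⁻¹) * G = G * H / (u * v) := by field_simp; ring
    rwa [this, one_le_div (by positivity)] at h
  have hgapH : amGmGap u v x * H ≤ (u - v) ^ 2 := by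
    have hAH : amGmGap u v x * H = x * (1 - x) * (u - v) ^ 2 - (G * H - u * v) := by
      unfold amGmGap; ring
    have hx : x * (1 - x) ≤ 1 := by nlinarith
    nlinarith [mul_le_mul_of_nonneg_right hx (sq_nonneg (u - v))]
  calc amGmGap u v x ≤ (u - v) ^ 2 / H := by rwa [le_div_iff₀ (hw.trans_le hwH)]
    _ ≤ (u - v) ^ 2 / w := by gcongr

noncomputable def logMean (a b : ℝ) : ℝ := (a - b) / (log a - log b)

lemma log_sub_log_ne_zero {a b : ℝ} (ha : 0 < a) (hb : 0 < b) (hab : a ≠ b) :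
    log a - log b ≠ 0 :=
  sub_ne_zero.2 fun h => hab (log_injOn_pos ha hb h)

lemma logMean_comm (a b : ℝ) : logMean a b = logMean b a := by
  rw [logMean, logMean, ← neg_sub a, ← neg_sub (log a), neg_div_neg_eq]

lemma logMean_mul_log_sub_log {a b : ℝ} (ha : 0 < a) (hb : 0 < b) (hab : a ≠ b) :
    logMean a b * (log a - log b) = a - b :=
  div_mul_cancel₀ _ (log_sub_log_ne_zero ha hb hab)

lemma logMean_mem_Ioo {a b : ℝ} (hb : 0 < b) (hba : b < a) : logMean a b ∈ Ioo b a := by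
  have ha : 0 < a := hb.trans hba
  have hlog : 0 < log a - log b := sub_pos.2 (log_lt_log hb hba)
  have hab := log_lt_sub_one_of_pos (div_pos ha hb) ((one_lt_div hb).2 hba).ne'
  have hba' := log_lt_sub_one_of_pos (div_pos hb ha) ((div_lt_one ha).2 hba).ne
  rw [log_div ha.ne' hb.ne', div_sub_one hb.ne', lt_div_iff₀ hb] at hab
  rw [log_div hb.ne' ha.ne', div_sub_one ha.ne', lt_div_iff₀ ha] at hba'
  constructor
  · rw [logMean, lt_div_iff₀ hlog]; linarith
  · rw [logMean, div_lt_iff₀ hlog]; linarith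

lemma logMean_pos {a b : ℝ} (ha : 0 < a) (hb : 0 < b) (hab : a ≠ b) : 0 < logMean a b := by
  rcases hab.lt_or_gt with h | h
  · exact logMean_comm a b ▸ ha.trans (logMean_mem_Ioo ha h).1
  · exact hb.trans (logMean_mem_Ioo hb h).1

/-- The weight at which the weighted geometric mean of `a` and `b` is their logarithmic mean. -/
lemma div_log_sub_log_mem_Icc {a b : ℝ} (ha : 0 < a) (hb : 0 < b) (hab : a ≠ b) :
    (log (logMean a b) - log b) / (log a - log b) ∈ Icc 0 1 := by
  wlog hba : b < a generalizing a b
  · have h := this hb ha hab.symm (hab.lt_or_gt.resolve_right hba)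
    have hlog := log_sub_log_ne_zero ha hb hab
    have hlog' := log_sub_log_ne_zero hb ha hab.symm
    have : (log (logMean a b) - log b) / (log a - log b)
        = 1 - (log (logMean b a) - log a) / (log b - log a) := by
      rw [logMean_comm]; field_simp; ring
    rw [this]
    exact ⟨sub_nonneg.2 h.2, sub_le_self _ h.1⟩
  obtain ⟨hbL, hLa⟩ := logMean_mem_Ioo hb hba
  have hlog : 0 < log a - log b := sub_pos.2 (log_lt_log hb hba)
  have hL : 0 < logMean a b := hb.trans hbL
  refine ⟨div_nonneg ?_ hlog.le, (div_le_one hlog).2 ?_⟩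
  · linarith [log_lt_log hb hbL]
  · linarith [log_lt_log hL hLa]

/-- The tangent line to `exp` at `log L`. -/
lemma mul_sub_log_add_one_le_exp {L : ℝ} (hL : 0 < L) (y : ℝ) :
    L * (y - log L + 1) ≤ exp y := by
  have h := add_one_le_exp (y - log L)
  rw [exp_sub, exp_log hL, le_div_iff₀ hL] at h
  linarith

lemma rpow_mul_rpow_eq_exp {a b : ℝ} (ha : 0 < a) (hb : 0 < b) (x : ℝ) :
    a ^ x * b ^ (1 - x) = exp (x * log a + (1 - x) * log b) := by
  rw [rpow_def_of_pos ha, rpow_def_of_pos hb, ← exp_add, mul_comm x, mul_comm (1 - x)]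

lemma log_exp_one_mul_div {a L : ℝ} (ha : 0 < a) (hL : 0 < L) :
    log (exp 1 * a / L) = 1 + log a - log L := by
  rw [log_div (by positivity) hL.ne', log_mul (exp_ne_zero 1) ha.ne', log_exp]

lemma isGreatest_amGmGap_image {a b : ℝ} (ha : 0 < a) (hb : 0 < b) (hab : a ≠ b) :
    IsGreatest (amGmGap a b '' Icc 0 1) (a - logMean a b * log (exp 1 * a / logMean a b)) := by
  set L := logMean a b
  have hL : 0 < L := logMean_pos ha hb hab
  have hLlog : L * (log a - log b) = a - b := logMean_mul_log_sub_log ha hb hab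
  rw [log_exp_one_mul_div ha hL]
  refine ⟨⟨(log L - log b) / (log a - log b), div_log_sub_log_mem_Icc ha hb hab, ?_⟩, ?_⟩
  · set x₀ := (log L - log b) / (log a - log b)
    have hlog := log_sub_log_ne_zero ha hb hab
    have hx₀ : x₀ * log a + (1 - x₀) * log b = log L := by
      simp only [x₀]; field_simp; ring
    have hx₀L : x₀ * (a - b) = L * (log L - log b) := by
      rw [← hLlog]; simp only [x₀]; field_simp
    rw [amGmGap, rpow_mul_rpow_eq_exp ha hb, hx₀, exp_log hL]
    linear_combination hx₀L + hLlog
  · rintro _ ⟨x, -, rfl⟩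
    have h := mul_sub_log_add_one_le_exp hL (x * log a + (1 - x) * log b)
    rw [← rpow_mul_rpow_eq_exp ha hb] at h
    rw [amGmGap]
    linear_combination h + (1 - x) * hLlog

theorem max_g_tendsto_atTop (a b : ℝ) (ha : 0 < a) (hb : 0 < b) (hab : a ≠ b) :
    Tendsto
      (fun t : ℝ => sSup ((fun x : ℝ =>
        t - a ^ x * b ^ (1 - x) - (t - a) ^ x * (t - b) ^ (1 - x)) '' Icc 0 1))
      atTop
      (nhds (a - ((a - b) / (Real.log a - Real.log b)) *
        Real.log (Real.exp 1 * a * (Real.log a - Real.log b) / (a - b)))) := by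
  have hsplit : ∀ t x, t - a ^ x * b ^ (1 - x) - (t - a) ^ x * (t - b) ^ (1 - x)
      = amGmGap a b x + amGmGap (t - a) (t - b) x := fun t x => by unfold amGmGap; ring
  have hε : Tendsto (fun t => (b - a) ^ 2 / (t - (a + b))) atTop (𝓝 0) :=
    tendsto_const_nhds.div_atTop (tendsto_atTop_add_const_right _ _ tendsto_id)
  rw [← div_div_eq_mul_div]
  refine tendsto_sSup_image_of_le_of_le (isGreatest_amGmGap_image ha hb hab) hε ?_ ?_
  · filter_upwards [eventually_ge_atTop (a + b)] with t ht x hx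
    rw [hsplit]
    linarith [amGmGap_nonneg (u := t - a) (v := t - b) (by linarith) (by linarith) hx]
  · filter_upwards [eventually_gt_atTop (a + b)] with t ht x hx
    rw [hsplit, add_le_add_iff_left]
    have h := amGmGap_le (u := t - a) (v := t - b) (w := t - (a + b)) (by linarith)
      (by linarith) (by linarith) hx
    rwa [sub_sub_sub_cancel_left] at h
end

section
/- Let 0 < q < p < 1, α ∈ (0,1), y = log((1−q)/(1−p))/log(p/q), and let X₁,…,X_m be i.i.d. with P(X_i = 1) = αp, P(X_i = −y) = α(1−p), P(X_i = 0) = 1−α. Then for every ε > 0 and n ≥ 1, log P(∑_{i=1}^m X_i ≤ ε·log n) ≤ −α·m·Δ₊(p,q) + ε·log(p/q)·log n, where Δ₊(p,q) = max_{x∈[0,1]} (1 − p^x q^{1−x} − (1−p)^x (1−q)^{1−x}). -/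
/-!
Chernoff's bound for the lower tail, at the tilt `t = -(1 - x) log (p / q)` with `x ∈ [0, 1]`.
The value of `y` makes both nonzero atoms tilt into Hellinger-type terms,
`p e^t = p^x q^(1-x)` and `(1 - p) e^(-t y) = (1 - p)^x (1 - q)^(1-x)`, so at `t` every `X i` has
moment generating function `1 - α g(x) ≤ exp (-α g(x))`, where
`g(x) = 1 - p^x q^(1-x) - (1 - p)^x (1 - q)^(1-x)`. Independence then gives
`P(∑ X i ≤ a) ≤ exp ((1 - x) log (p / q) a - α m g(x)) ≤ exp (log (p / q) a - α m g(x))` for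
`a = ε log n ≥ 0`, and the supremum over `x` is `Δ₊(p, q)`. The probability is positive, since all
`X i` vanish together with probability `(1 - α)^m`, so its logarithm is not a junk value.
-/

open Set MeasureTheory ProbabilityTheory Real

section FiniteSupport

variable {Ω : Type*} [MeasurableSpace Ω] {μ : Measure Ω} {X : Ω → ℝ} {s : Finset ℝ}

lemma ae_mem_of_sum_measure_preimage_singleton_eq_one [IsProbabilityMeasure μ]
    (hX : Measurable X) (h : ∑ v ∈ s, μ (X ⁻¹' {v}) = 1) : ∀ᵐ ω ∂μ, X ω ∈ s := by
  refine (ae_mem_iff_measure_eq (s := X ⁻¹' s) (hX s.measurableSet).nullMeasurableSet).2 ?_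
  rw [measure_univ, ← Measure.map_apply hX s.measurableSet, ← sum_measure_singleton, ← h]
  exact Finset.sum_congr rfl fun v _ => Measure.map_apply hX (measurableSet_singleton v)

variable [IsFiniteMeasure μ]

lemma integrable_exp_mul_of_ae_mem_finset (hX : Measurable X) (hs : ∀ᵐ ω ∂μ, X ω ∈ s)
    (t : ℝ) : Integrable (fun ω => exp (t * X ω)) μ := by
  have hmap : ∀ᵐ v ∂μ.map X, v ∈ (s : Set ℝ) := (ae_map_iff hX.aemeasurable s.measurableSet).2 hs
  refine (integrable_map_measure (g := fun v => exp (t * v)) (by fun_prop)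
    hX.aemeasurable).1 ?_
  rw [← Measure.restrict_eq_self_of_ae_mem hmap]
  exact (by fun_prop : Continuous fun v => exp (t * v)).continuousOn.integrableOn_compact
    s.finite_toSet.isCompact

lemma mgf_eq_sum_of_ae_mem_finset (hX : Measurable X) (hs : ∀ᵐ ω ∂μ, X ω ∈ s) (t : ℝ) :
    mgf X μ t = ∑ v ∈ s, μ.real (X ⁻¹' {v}) * exp (t * v) := by
  have hmap : ∀ᵐ v ∂μ.map X, v ∈ (s : Set ℝ) := (ae_map_iff hX.aemeasurable s.measurableSet).2 hs
  have hint : IntegrableOn (fun v => exp (t * v)) s (μ.map X) :=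
    (by fun_prop : Continuous fun v => exp (t * v)).continuousOn.integrableOn_compact
      s.finite_toSet.isCompact
  rw [mgf, ← integral_map (f := fun v => exp (t * v)) hX.aemeasurable (by fun_prop),
    ← Measure.restrict_eq_self_of_ae_mem hmap, setIntegral_finset s hint]
  refine Finset.sum_congr rfl fun v _ => ?_
  rw [smul_eq_mul, Measure.real, Measure.real, Measure.map_apply hX (measurableSet_singleton v)]

end FiniteSupport

namespace ProbabilityTheory

variable {Ω ι : Type*} [MeasurableSpace Ω] {μ : Measure Ω} [Fintype ι] {X : ι → Ω → ℝ}

lemma iIndepFun.measure_sum_le_of_cgf_le [IsProbabilityMeasure μ] (hindep : iIndepFun X μ)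
    (hmeas : ∀ i, Measurable (X i)) {t c : ℝ} (ht : t ≤ 0)
    (hint : ∀ i, Integrable (fun ω => exp (t * X i ω)) μ) (hcgf : ∀ i, cgf (X i) μ t ≤ c)
    (a : ℝ) : μ.real {ω | ∑ i, X i ω ≤ a} ≤ exp (-t * a + Fintype.card ι * c) := by
  have hchernoff := measure_le_le_exp_cgf (X := ∑ i, X i) a ht
    (hindep.integrable_exp_mul_sum hmeas (s := Finset.univ) fun i _ => hint i)
  simp only [Finset.sum_apply] at hchernoff
  refine hchernoff.trans (exp_le_exp.2 ?_)
  gcongr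
  rw [hindep.cgf_sum hmeas fun i _ => hint i, ← nsmul_eq_mul]
  exact Finset.sum_le_card_nsmul _ _ _ fun i _ => hcgf i

lemma iIndepFun.measure_sum_le_ne_zero (hindep : iIndepFun X μ)
    (hzero : ∀ i, μ (X i ⁻¹' {0}) ≠ 0) {a : ℝ} (ha : 0 ≤ a) :
    μ {ω | ∑ i, X i ω ≤ a} ≠ 0 := by
  have hsub : (⋂ i ∈ Finset.univ, X i ⁻¹' {0}) ⊆ {ω | ∑ i, X i ω ≤ a} := fun ω hω => by
    simp only [Finset.mem_univ, iInter_true, mem_iInter, mem_preimage, mem_singleton_iff] at hω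
    simpa [hω] using ha
  intro h
  have hprod := measure_mono_null hsub h
  rw [hindep.measure_inter_preimage_eq_mul _ fun i _ => measurableSet_singleton 0] at hprod
  exact Finset.prod_ne_zero_iff.2 (fun i _ => hzero i) hprod

end ProbabilityTheory

lemma mul_sSup_image_le {α : Type*} {f : α → ℝ} {s : Set α} {a c : ℝ} (ha : 0 ≤ a)
    (hc : 0 ≤ c) (h : ∀ x ∈ s, a * f x ≤ c) : a * sSup (f '' s) ≤ c := by
  rw [← smul_eq_mul, ← Real.sSup_smul_of_nonneg ha]
  refine Real.sSup_le ?_ hc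
  rintro _ ⟨_, ⟨x, hx, rfl⟩, rfl⟩
  exact h x hx

lemma rpow_mul_rpow_one_sub {a b : ℝ} (ha : 0 < a) (hb : 0 < b) (x : ℝ) :
    a ^ x * b ^ (1 - x) = a * exp ((1 - x) * log (b / a)) := by
  calc a ^ x * b ^ (1 - x) = exp (log a + (1 - x) * (log b - log a)) := by
        rw [rpow_def_of_pos ha, rpow_def_of_pos hb, ← exp_add]
        ring_nf
    _ = a * exp ((1 - x) * log (b / a)) := by
        rw [exp_add, exp_log ha, log_div hb.ne' ha.ne']

section ThreePoint

variable {Ω : Type*} [MeasurableSpace Ω] {μ : Measure Ω} [IsProbabilityMeasure μ] {Z : Ω → ℝ}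
  {u v a b c : ℝ}

lemma ae_mem_three_point (hZ : Measurable Z) (huv : u ≠ v) (hu : u ≠ 0) (hv : v ≠ 0)
    (ha : 0 ≤ a) (hb : 0 ≤ b) (hc : 0 ≤ c) (habc : a + b + c = 1)
    (hZu : μ {ω | Z ω = u} = ENNReal.ofReal a) (hZv : μ {ω | Z ω = v} = ENNReal.ofReal b)
    (hZ0 : μ {ω | Z ω = 0} = ENNReal.ofReal c) : ∀ᵐ ω ∂μ, Z ω ∈ ({u, v, 0} : Finset ℝ) := by
  refine ae_mem_of_sum_measure_preimage_singleton_eq_one hZ ?_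
  rw [Finset.sum_insert (by simp [huv, hu]), Finset.sum_insert (by simp [hv]),
    Finset.sum_singleton]
  change μ {ω | Z ω = u} + (μ {ω | Z ω = v} + μ {ω | Z ω = 0}) = 1
  rw [hZu, hZv, hZ0, ← ENNReal.ofReal_add hb hc, ← ENNReal.ofReal_add ha (add_nonneg hb hc),
    ← add_assoc, habc, ENNReal.ofReal_one]

lemma mgf_three_point (hZ : Measurable Z) (huv : u ≠ v) (hu : u ≠ 0) (hv : v ≠ 0)
    (hsupp : ∀ᵐ ω ∂μ, Z ω ∈ ({u, v, 0} : Finset ℝ)) (ha : 0 ≤ a) (hb : 0 ≤ b) (hc : 0 ≤ c)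
    (hZu : μ {ω | Z ω = u} = ENNReal.ofReal a) (hZv : μ {ω | Z ω = v} = ENNReal.ofReal b)
    (hZ0 : μ {ω | Z ω = 0} = ENNReal.ofReal c) (t : ℝ) :
    mgf Z μ t = a * exp (t * u) + b * exp (t * v) + c := by
  rw [mgf_eq_sum_of_ae_mem_finset hZ hsupp, Finset.sum_insert (by simp [huv, hu]),
    Finset.sum_insert (by simp [hv]), Finset.sum_singleton]
  change (μ {ω | Z ω = u}).toReal * _ + ((μ {ω | Z ω = v}).toReal * _ +
    (μ {ω | Z ω = 0}).toReal * _) = _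
  rw [hZu, hZv, hZ0, ENNReal.toReal_ofReal ha, ENNReal.toReal_ofReal hb,
    ENNReal.toReal_ofReal hc, mul_zero, exp_zero]
  ring

end ThreePoint

/-- `Δ₊(p, q)` is the supremum of `bernoulliChernoffGap p q` over `[0, 1]`. -/
noncomputable def bernoulliChernoffGap (p q x : ℝ) : ℝ :=
  1 - p ^ x * q ^ (1 - x) - (1 - p) ^ x * (1 - q) ^ (1 - x)

lemma log_div_one_sub_div_log_div_pos {p q : ℝ} (hq : 0 < q) (hqp : q < p) (hp : p < 1) :
    0 < log ((1 - q) / (1 - p)) / log (p / q) :=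
  div_pos (log_pos ((one_lt_div (by linarith)).2 (by linarith))) (log_pos ((one_lt_div hq).2 hqp))

lemma mgf_eq_one_sub_mul_bernoulliChernoffGap {Ω : Type*} [MeasurableSpace Ω] {μ : Measure Ω}
    [IsProbabilityMeasure μ] {Z : Ω → ℝ} (hZ : Measurable Z) {p q α y : ℝ}
    (hq : 0 < q) (hqp : q < p) (hp : p < 1) (hα : 0 ≤ α) (hα1 : α ≤ 1)
    (hy : y = log ((1 - q) / (1 - p)) / log (p / q))
    (hsupp : ∀ᵐ ω ∂μ, Z ω ∈ ({1, -y, 0} : Finset ℝ))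
    (hZ1 : μ {ω | Z ω = 1} = ENNReal.ofReal (α * p))
    (hZy : μ {ω | Z ω = -y} = ENNReal.ofReal (α * (1 - p)))
    (hZ0 : μ {ω | Z ω = 0} = ENNReal.ofReal (1 - α)) (x : ℝ) :
    mgf Z μ (-((1 - x) * log (p / q))) = 1 - α * bernoulliChernoffGap p q x := by
  have hp0 : 0 < p := hq.trans hqp
  have hy0 : 0 < y := hy ▸ log_div_one_sub_div_log_div_pos hq hqp hp
  have htilt_one : -((1 - x) * log (p / q)) * 1 = (1 - x) * log (q / p) := by
    rw [← inv_div, log_inv]; ring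
  have htilt_y : -((1 - x) * log (p / q)) * -y = (1 - x) * log ((1 - q) / (1 - p)) := by
    rw [hy]
    field_simp [(log_pos ((one_lt_div hq).2 hqp)).ne']
  rw [mgf_three_point hZ (by linarith) one_ne_zero (by linarith) hsupp (mul_nonneg hα hp0.le)
    (mul_nonneg hα (by linarith)) (by linarith) hZ1 hZy hZ0, htilt_one, htilt_y,
    mul_assoc, mul_assoc, ← rpow_mul_rpow_one_sub hp0 hq,
    ← rpow_mul_rpow_one_sub (by linarith) (by linarith), bernoulliChernoffGap]
  ring

theorem concentration_X_general {Ω : Type*} [MeasurableSpace Ω] (μ : Measure Ω)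
    [IsProbabilityMeasure μ] (m : ℕ) (p q α : ℝ)
    (hq : 0 < q) (hqp : q < p) (hp : p < 1) (hα : 0 < α) (hα1 : α < 1)
    (y : ℝ) (hy : y = Real.log ((1 - q) / (1 - p)) / Real.log (p / q))
    (X : Fin m → Ω → ℝ) (hmeas : ∀ i, Measurable (X i))
    (hindep : iIndepFun X μ)
    (hdist1 : ∀ i, μ {ω | X i ω = 1} = ENNReal.ofReal (α * p))
    (hdist2 : ∀ i, μ {ω | X i ω = -y} = ENNReal.ofReal (α * (1 - p)))
    (hdist3 : ∀ i, μ {ω | X i ω = 0} = ENNReal.ofReal (1 - α))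
    (ε : ℝ) (hε : 0 < ε) (n : ℕ) :
    Real.log ((μ {ω | ∑ i, X i ω ≤ ε * Real.log n}).toReal) ≤
      -(α * m * sSup ((fun x : ℝ =>
          1 - p ^ x * q ^ (1 - x) - (1 - p) ^ x * (1 - q) ^ (1 - x)) '' Icc 0 1))
        + ε * Real.log (p / q) * Real.log n := by
  have hL : 0 < log (p / q) := log_pos ((one_lt_div hq).2 hqp)
  have hy0 : 0 < y := hy ▸ log_div_one_sub_div_log_div_pos hq hqp hp
  have hsupp i : ∀ᵐ ω ∂μ, X i ω ∈ ({1, -y, 0} : Finset ℝ) :=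
    ae_mem_three_point (hmeas i) (by linarith) one_ne_zero (by linarith)
      (mul_nonneg hα.le (hq.trans hqp).le) (mul_nonneg hα.le (by linarith)) (by linarith)
      (by ring) (hdist1 i) (hdist2 i) (hdist3 i)
  set a := ε * log n
  set P := μ.real {ω | ∑ i, X i ω ≤ a}
  have ha : 0 ≤ a := mul_nonneg hε.le (log_natCast_nonneg n)
  have hP : 0 < P := ENNReal.toReal_pos (hindep.measure_sum_le_ne_zero
    (fun i => (hdist3 i).trans_ne (ENNReal.ofReal_pos.2 (by linarith)).ne') ha) (by finiteness)
  have hbound : ∀ x ∈ Icc (0 : ℝ) 1,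
      α * m * bernoulliChernoffGap p q x ≤ log (p / q) * a - log P := by
    rintro x ⟨hx0, hx1⟩
    set t := -((1 - x) * log (p / q))
    have hint i := integrable_exp_mul_of_ae_mem_finset (hmeas i) (hsupp i) t
    have hcgf i : cgf (X i) μ t ≤ -(α * bernoulliChernoffGap p q x) := by
      refine (log_le_sub_one_of_pos (mgf_pos (hint i))).trans_eq ?_
      rw [mgf_eq_one_sub_mul_bernoulliChernoffGap (hmeas i) hq hqp hp hα.le hα1.le hy
        (hsupp i) (hdist1 i) (hdist2 i) (hdist3 i)]
      ring
    have hchernoff := hindep.measure_sum_le_of_cgf_le hmeas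
      (neg_nonpos.2 (mul_nonneg (by linarith) hL.le)) hint hcgf a
    rw [← log_le_iff_le_exp hP, Fintype.card_fin] at hchernoff
    nlinarith [mul_nonneg (mul_nonneg hx0 hL.le) ha]
  have hlogP : log P ≤ 0 := log_nonpos measureReal_nonneg measureReal_le_one
  have hsSup := mul_sSup_image_le (by positivity)
    (sub_nonneg.2 (hlogP.trans (mul_nonneg hL.le ha))) hbound
  change log P ≤ _
  unfold bernoulliChernoffGap at hsSup
  linarith

theorem concentration_X {Ω : Type*} [MeasurableSpace Ω] (μ : Measure Ω)
    [IsProbabilityMeasure μ] (m : ℕ) (p q α : ℝ)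
    (hq : 0 < q) (hqp : q < p) (hp : p < 1) (hα : 0 < α) (hα1 : α < 1)
    (y : ℝ) (hy : y = Real.log ((1 - q) / (1 - p)) / Real.log (p / q))
    (X : Fin m → Ω → ℝ) (hmeas : ∀ i, Measurable (X i))
    (hindep : iIndepFun X μ)
    (hdist1 : ∀ i, μ {ω | X i ω = 1} = ENNReal.ofReal (α * p))
    (hdist2 : ∀ i, μ {ω | X i ω = -y} = ENNReal.ofReal (α * (1 - p)))
    (hdist3 : ∀ i, μ {ω | X i ω = 0} = ENNReal.ofReal (1 - α))
    (ε : ℝ) (hε : 0 < ε) (n : ℕ) (hn : 1 ≤ n) :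
    Real.log ((μ {ω | ∑ i, X i ω ≤ ε * Real.log n}).toReal) ≤
      -(α * m * sSup ((fun x : ℝ =>
          1 - p ^ x * q ^ (1 - x) - (1 - p) ^ x * (1 - q) ^ (1 - x)) '' Icc 0 1))
        + ε * Real.log (p / q) * Real.log n :=
  concentration_X_general μ m p q α hq hqp hp hα hα1 y hy X hmeas hindep hdist1 hdist2 hdist3 ε hε n
end

section
/- Let (p_n), (q_n), (t_n) be sequences of reals with 0 < p_n, q_n < 1, p_n → 0, q_n → 0, t_n·p_n → a and t_n·q_n → b for constants a, b with a = b > 0. Then t_n · max_{x∈[0,1]} (x·p_n + (1−x)·q_n − p_n^x q_n^{1−x}) → 0 as n → ∞. -/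
/-!
On `[0, 1]` the weighted arithmetic mean `x p + (1 - x) q` is at most `max p q`, while the
weighted geometric mean `p ^ x q ^ (1 - x)` is at least `min p q`; hence
`0 ≤ m(p, q) ≤ |p - q|`, with `0` attained at `x = 0`. Multiplying by `t_n` gives
`|t_n m(p_n, q_n)| ≤ |t_n p_n - t_n q_n| → |a - b| = 0`.
-/

open Set Filter

namespace Real

lemma min_le_rpow_mul_rpow {p q x : ℝ} (hp : 0 ≤ p) (hq : 0 ≤ q) (hx₀ : 0 ≤ x) (hx₁ : x ≤ 1) :
    min p q ≤ p ^ x * q ^ (1 - x) := by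
  have hm : 0 ≤ min p q := le_min hp hq
  calc min p q = min p q ^ x * min p q ^ (1 - x) := by
        rw [← rpow_add' hm (by norm_num), add_sub_cancel, rpow_one]
    _ ≤ p ^ x * q ^ (1 - x) :=
        mul_le_mul (rpow_le_rpow hm (min_le_left p q) hx₀)
          (rpow_le_rpow hm (min_le_right p q) (sub_nonneg.2 hx₁)) (rpow_nonneg hm _)
          (rpow_nonneg hp _)

end Real

/-- The quantity `m(p, q)`. -/
noncomputable def maxGap (p q : ℝ) : ℝ :=
  sSup ((fun x : ℝ => x * p + (1 - x) * q - p ^ x * q ^ (1 - x)) '' Icc 0 1)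

section maxGap

variable {p q : ℝ}

lemma gap_le_abs_sub (hp : 0 ≤ p) (hq : 0 ≤ q) {x : ℝ} (hx : x ∈ Icc (0 : ℝ) 1) :
    x * p + (1 - x) * q - p ^ x * q ^ (1 - x) ≤ |p - q| := by
  have harith : x * p + (1 - x) * q ≤ max p q := by
    simpa using Convex.combo_le_max p q hx.1 (sub_nonneg.2 hx.2) (add_sub_cancel x 1)
  have hgeom := Real.min_le_rpow_mul_rpow hp hq hx.1 hx.2
  rw [← max_sub_min_eq_abs']
  linarith

lemma maxGap_le_abs_sub (hp : 0 ≤ p) (hq : 0 ≤ q) : maxGap p q ≤ |p - q| :=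
  csSup_le ((nonempty_Icc.2 zero_le_one).image _) <| by
    rintro _ ⟨x, hx, rfl⟩
    exact gap_le_abs_sub hp hq hx

lemma maxGap_nonneg (hp : 0 ≤ p) (hq : 0 ≤ q) : 0 ≤ maxGap p q := by
  refine le_csSup ⟨|p - q|, ?_⟩ ⟨0, left_mem_Icc.2 zero_le_one, by simp⟩
  rintro _ ⟨x, hx, rfl⟩
  exact gap_le_abs_sub hp hq hx

lemma abs_mul_maxGap_le (t : ℝ) (hp : 0 ≤ p) (hq : 0 ≤ q) :
    |t * maxGap p q| ≤ |t * p - t * q| := by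
  rw [abs_mul, abs_of_nonneg (maxGap_nonneg hp hq), ← mul_sub, abs_mul]
  gcongr
  exact maxGap_le_abs_sub hp hq

end maxGap

theorem degenerate_case_general (p q t : ℕ → ℝ) (a b : ℝ)
    (hp : ∀ n, p n ∈ Ioo (0:ℝ) 1) (hq : ∀ n, q n ∈ Ioo (0:ℝ) 1)
    (htp : Tendsto (fun n => t n * p n) atTop (nhds a))
    (htq : Tendsto (fun n => t n * q n) atTop (nhds b))
    (hab : a = b) :
    Tendsto (fun n => t n * sSup ((fun x : ℝ =>
        x * p n + (1 - x) * q n - (p n) ^ x * (q n) ^ (1 - x)) '' Icc 0 1))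
      atTop (nhds 0) := by
  have hdiff : Tendsto (fun n => t n * p n - t n * q n) atTop (nhds 0) := by
    simpa [hab] using htp.sub htq
  exact squeeze_zero_norm (fun n => abs_mul_maxGap_le (t n) (hp n).1.le (hq n).1.le)
    (tendsto_zero_iff_norm_tendsto_zero.1 hdiff)

theorem degenerate_case (p q t : ℕ → ℝ) (a b : ℝ)
    (hp : ∀ n, p n ∈ Ioo (0:ℝ) 1) (hq : ∀ n, q n ∈ Ioo (0:ℝ) 1)
    (hp0 : Tendsto p atTop (nhds 0)) (hq0 : Tendsto q atTop (nhds 0))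
    (htp : Tendsto (fun n => t n * p n) atTop (nhds a))
    (htq : Tendsto (fun n => t n * q n) atTop (nhds b))
    (hab : a = b) (ha : 0 < a) :
    Tendsto (fun n => t n * sSup ((fun x : ℝ =>
        x * p n + (1 - x) * q n - (p n) ^ x * (q n) ^ (1 - x)) '' Icc 0 1))
      atTop (nhds 0) :=
  degenerate_case_general p q t a b hp hq htp htq hab
end
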